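/- The number of permutations of {1,...,n} with no adjacent cycle of any of the lengths q_1,...,q_m equals Σ (-1)^{Σ_j t_j} * (n - Σ_j (q_j-1) t_j)! / Π_j t_j!, where the sum runs over all m-tuples (t_1,...,t_m) of nonnegative integers with Σ_j q_j t_j ≤ n. -/

import Mathlib

/-!
Inclusion–exclusion over the sets `T` of potential adjacent cycles `(j, a)`, the cycle of length
`Q j` on the block `[a, a + Q j)`. Two adjacent cycles of one permutation with distinct lengths or
starts have disjoint blocks, so only packings `T` (pairwise disjoint blocks) contribute, and then
prescribing the permutation on the union of the blocks leaves `(n - ∑_{(j, a) ∈ T} Q j)!` choices.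
Grouping packings by their type `t` (`t j` blocks of length `Q j`), it remains to count them: they
are the arrangements in a row of `∑ j, t j` blocks and `n - ∑ j, Q j * t j` free points, i.e.
`(n - ∑ j, (Q j - 1) * t j)! / (∏ j, (t j)! * (n - ∑ j, Q j * t j)!)` of them, which follows by
recursion on whether the last point is covered.
-/

open Finset

/-- `a` with `a+1`, ..., `a+q-1` (0-indexed) form an adjacent `q`-cycle of `π`. -/
def isAdjCycle (q : ℕ) {n : ℕ} (π : Equiv.Perm (Fin n)) (a : ℕ) : Prop :=
  a + q ≤ n ∧ ∀ i : Fin n, a ≤ i.val → i.val < a + q →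
    (π i).val = if i.val = a + q - 1 then a else i.val + 1

instance (q n : ℕ) (π : Equiv.Perm (Fin n)) (a : ℕ) : Decidable (isAdjCycle q π a) := by
  unfold isAdjCycle; infer_instance

/-- The number of adjacent `q`-cycles of a permutation of `{1,...,n}`. -/
def adjCycleCount (q : ℕ) {n : ℕ} (π : Equiv.Perm (Fin n)) : ℕ :=
  ((Finset.range n).filter (isAdjCycle q π)).card

/-- `numAqC q n k` = number of permutations of `{1,...,n}` with exactly `k` adjacent `q`-cycles. -/
def numAqC (q n k : ℕ) : ℕ :=
  (Finset.univ.filter (fun π : Equiv.Perm (Fin n) => adjCycleCount q π = k)).card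


/-- number of permutations of `{1,...,n}` with exactly `k j` adjacent `Q j`-cycles for each `j`. -/
def numMulti {m : ℕ} (Q : Fin m → ℕ) (n : ℕ) (k : Fin m → ℕ) : ℕ :=
  (Finset.univ.filter
    (fun π : Equiv.Perm (Fin n) => ∀ j, adjCycleCount (Q j) π = k j)).card

open Equiv

section PermCount

variable {α : Type*} [Fintype α] [DecidableEq α]

theorem card_perm_fixing (F : Finset α) :
    #{π : Perm α | ∀ x ∈ F, π x = x} = (Fintype.card α - #F).factorial := by
  rw [← Fintype.card_subtype,
    Fintype.card_congr (Equiv.subtypeEquivRight fun π => by simp only [not_not] :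
      {π : Perm α // ∀ x ∈ F, π x = x} ≃ {π : Perm α // ∀ x, ¬x ∉ F → π x = x}),
    Fintype.card_congr (Perm.subtypeEquivSubtypePerm fun x => x ∉ F).symm, Fintype.card_perm,
    Fintype.card_subtype, filter_not, card_sdiff_of_subset (subset_univ _), card_univ,
    filter_mem_eq_inter, univ_inter]

/-- The bijection is `π ↦ π * c⁻¹`, which does not change values off `I`. -/
theorem card_perm_eqOn_eq_card_perm_fixing (c : Perm α) {I : Finset α}
    (hc : ∀ x ∉ I, c x = x) (R : Perm α → Prop) [DecidablePred R]
    (hR : ∀ π π' : Perm α, (∀ x ∉ I, π x = π' x) → (R π ↔ R π')) :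
    #{π | R π ∧ ∀ x ∈ I, π x = c x} = #{π | R π ∧ ∀ x ∈ I, π x = x} := by
  have hc_inv : ∀ x ∉ I, c⁻¹ x = x := fun x hx => by
    rw [Perm.inv_eq_iff_eq, hc x hx]
  have hc_mem : ∀ x ∈ I, c x ∈ I := fun x hx => by
    by_contra h
    exact h (by rwa [c.injective (hc _ h)])
  have hc_inv_mem : ∀ x ∈ I, c⁻¹ x ∈ I := fun x hx => by
    by_contra h
    exact h (by rwa [c⁻¹.injective (hc_inv _ h)])
  refine card_bij' (fun π _ => π * c⁻¹) (fun π _ => π * c) ?_ ?_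
    (fun π _ => inv_mul_cancel_right π c) (fun π _ => mul_inv_cancel_right π c)
  · simp only [mem_filter, mem_univ, true_and]
    rintro π ⟨hRπ, hπ⟩
    refine ⟨(hR _ _ fun x hx => by rw [Perm.mul_apply, hc_inv x hx]).2 hRπ, fun x hx => ?_⟩
    exact (hπ _ (hc_inv_mem x hx)).trans (c.apply_symm_apply x)
  · simp only [mem_filter, mem_univ, true_and]
    rintro π ⟨hRπ, hπ⟩
    exact ⟨(hR _ _ fun x hx => by rw [Perm.mul_apply, hc x hx]).2 hRπ,
      fun x hx => hπ _ (hc_mem x hx)⟩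

theorem card_perm_eqOn_pairwiseDisjoint {ι : Type*} [DecidableEq ι] (I : ι → Finset α)
    (c : ι → Perm α) (S : Finset ι) (hc : ∀ i ∈ S, ∀ x ∉ I i, c i x = x)
    (hS : (S : Set ι).PairwiseDisjoint I) (F : Finset α) (hF : ∀ i ∈ S, Disjoint F (I i)) :
    #{π : Perm α | (∀ i ∈ S, ∀ x ∈ I i, π x = c i x) ∧ ∀ x ∈ F, π x = x}
      = (Fintype.card α - (#F + ∑ i ∈ S, #(I i))).factorial := by
  induction S using Finset.induction generalizing F with
  | empty => simp [card_perm_fixing]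
  | @insert i S hi ih =>
    rw [coe_insert, Set.pairwiseDisjoint_insert] at hS
    have hSi : ∀ j ∈ S, Disjoint (I j) (I i) := fun j hj =>
      (hS.2 j hj (ne_of_mem_of_not_mem hj hi).symm).symm
    have hFi : Disjoint F (I i) := hF i (mem_insert_self i S)
    calc #{π : Perm α | (∀ j ∈ insert i S, ∀ x ∈ I j, π x = c j x) ∧ ∀ x ∈ F, π x = x}
        = #{π : Perm α | ((∀ j ∈ S, ∀ x ∈ I j, π x = c j x) ∧ ∀ x ∈ F, π x = x) ∧
            ∀ x ∈ I i, π x = c i x} := by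
          congr 1; ext π; simp only [mem_filter, forall_mem_insert]; tauto
      _ = #{π : Perm α | ((∀ j ∈ S, ∀ x ∈ I j, π x = c j x) ∧ ∀ x ∈ F, π x = x) ∧
            ∀ x ∈ I i, π x = x} := by
          refine card_perm_eqOn_eq_card_perm_fixing _ (hc i (mem_insert_self i S)) _ fun π π' h => ?_
          have hS' : ∀ j ∈ S, ∀ x ∈ I j, π x = π' x := fun j hj x hx =>
            h x (disjoint_left.1 (hSi j hj) hx)
          have hF' : ∀ x ∈ F, π x = π' x := fun x hx => h x (disjoint_left.1 hFi hx)
          exact ⟨fun ⟨h1, h2⟩ => ⟨fun j hj x hx => (hS' j hj x hx).symm.trans (h1 j hj x hx),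
              fun x hx => (hF' x hx).symm.trans (h2 x hx)⟩,
            fun ⟨h1, h2⟩ => ⟨fun j hj x hx => (hS' j hj x hx).trans (h1 j hj x hx),
              fun x hx => (hF' x hx).trans (h2 x hx)⟩⟩
      _ = #{π : Perm α | (∀ j ∈ S, ∀ x ∈ I j, π x = c j x) ∧ ∀ x ∈ F ∪ I i, π x = x} := by
          congr 1; ext π; simp only [mem_filter, forall_mem_union]; tauto
      _ = _ := by
          rw [ih (fun j hj => hc j (mem_insert_of_mem hj)) hS.1 _ fun j hj =>
              disjoint_union_left.2 ⟨hF j (mem_insert_of_mem hj), (hSi j hj).symm⟩,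
            card_union_of_disjoint hFi, sum_insert hi]
          congr 2; ring

end PermCount

section AdjCycle

variable {n : ℕ}

def adjBlock (n a q : ℕ) : Finset (Fin n) := {i | a ≤ i.val ∧ i.val < a + q}

theorem mem_adjBlock {a q : ℕ} {i : Fin n} : i ∈ adjBlock n a q ↔ a ≤ i.val ∧ i.val < a + q := by
  simp [adjBlock]

theorem card_adjBlock {a q : ℕ} (h : a + q ≤ n) : #(adjBlock n a q) = q := by
  have : adjBlock n a q = (Ico a (a + q)).attachFin fun x hx => by simp at hx; omega := by
    ext i; simp [adjBlock, mem_attachFin]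
  rw [this, card_attachFin, Nat.card_Ico, Nat.add_sub_cancel_left]

theorem disjoint_adjBlock {a q a' q' : ℕ} (h : a + q ≤ a' ∨ a' + q' ≤ a) :
    Disjoint (adjBlock n a q) (adjBlock n a' q') :=
  disjoint_left.2 fun i hi hi' => by rw [mem_adjBlock] at hi hi'; omega

/-- The identity when `a + q > n`, so that `adjCycle` needs no proof argument. -/
def adjCycleFun (n a q : ℕ) (i : Fin n) : Fin n :=
  if h : a ≤ i.val ∧ i.val < a + q ∧ a + q ≤ n then
    if h' : i.val = a + q - 1 then ⟨a, by omega⟩ else ⟨i.val + 1, by omega⟩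
  else i

theorem adjCycleFun_injective (a q : ℕ) : Function.Injective (adjCycleFun n a q) := by
  intro i j hij
  unfold adjCycleFun at hij
  split_ifs at hij <;> simp only [Fin.ext_iff] at hij ⊢ <;> omega

noncomputable def adjCycle (n a q : ℕ) : Perm (Fin n) :=
  Equiv.ofBijective _ (Finite.injective_iff_bijective.1 (adjCycleFun_injective a q))

theorem adjCycle_apply_of_notMem {a q : ℕ} {i : Fin n} (hi : i ∉ adjBlock n a q) :
    adjCycle n a q i = i := by
  rw [mem_adjBlock] at hi
  simp only [adjCycle, ofBijective_apply, adjCycleFun]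
  rw [dif_neg (by tauto)]

theorem isAdjCycle_iff {q a : ℕ} {π : Perm (Fin n)} :
    isAdjCycle q π a ↔ a + q ≤ n ∧ ∀ i ∈ adjBlock n a q, π i = adjCycle n a q i := by
  refine and_congr_right fun hn => forall_congr' fun i => ?_
  simp only [mem_adjBlock, and_imp, adjCycle, ofBijective_apply, adjCycleFun, Fin.ext_iff]
  refine forall₂_congr fun h1 h2 => ?_
  rw [dif_pos ⟨h1, h2, hn⟩]
  split_ifs <;> rfl

/-- The last point of the block ending first would be sent to the start of both blocks. -/
theorem isAdjCycle.eq_or_disjoint {q q' a a' : ℕ} {π : Perm (Fin n)} (hq : 1 ≤ q) (hq' : 1 ≤ q')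
    (h : isAdjCycle q π a) (h' : isAdjCycle q' π a') :
    (q = q' ∧ a = a') ∨ a + q ≤ a' ∨ a' + q' ≤ a := by
  wlog hle : a + q ≤ a' + q' generalizing q q' a a'
  · have := this hq' hq h' h (by omega)
    omega
  by_contra! hc
  have hlast : a + q - 1 < n := by have := h.1; omega
  have e := h.2 ⟨a + q - 1, hlast⟩ (by simp; omega) (by simp; omega)
  have e' := h'.2 ⟨a + q - 1, hlast⟩ (by simp; omega) (by simp; omega)
  simp only at e e'
  split_ifs at e e' <;> omega

end AdjCycle

section Packing

variable {κ : Type*} (ℓ : κ → ℕ)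

/-- `S` lists pairwise disjoint blocks inside `[0, n)`: `(j, a) ∈ S` is the block `[a, a + ℓ j)`
with label `j`. -/
def IsPacking (n : ℕ) (S : Finset (κ × ℕ)) : Prop :=
  (∀ p ∈ S, p.2 + ℓ p.1 ≤ n) ∧
    ∀ p ∈ S, ∀ p' ∈ S, p ≠ p' → p.2 + ℓ p.1 ≤ p'.2 ∨ p'.2 + ℓ p'.1 ≤ p.2

variable {ℓ} in
theorem IsPacking.sum_le {n : ℕ} {S : Finset (κ × ℕ)} (hS : IsPacking ℓ n S) :
    ∑ p ∈ S, ℓ p.1 ≤ n := by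
  calc ∑ p ∈ S, ℓ p.1 = #(S.biUnion fun p => Ico p.2 (p.2 + ℓ p.1)) := by
        rw [card_biUnion fun p hp p' hp' hne => disjoint_left.2 fun x hx hx' => by
          simp only [mem_Ico] at hx hx'; have := hS.2 p hp p' hp' hne; omega]
        simp
    _ ≤ #(range n) := card_le_card fun x hx => by
        simp only [mem_biUnion, mem_Ico] at hx
        obtain ⟨p, hp, hx⟩ := hx
        have := hS.1 p hp
        simp only [mem_range]; omega
    _ = n := card_range n

variable [DecidableEq κ]

instance (n : ℕ) : DecidablePred (IsPacking ℓ n) := fun _ => by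
  unfold IsPacking; infer_instance

def blockCount (S : Finset (κ × ℕ)) (j : κ) : ℕ := #{p ∈ S | p.1 = j}

theorem blockCount_insert_eq_iff {S : Finset (κ × ℕ)} {b : κ × ℕ} (hb : b ∉ S) {t : κ → ℕ}
    (ht : 1 ≤ t b.1) :
    blockCount (insert b S) = t ↔ blockCount S = Function.update t b.1 (t b.1 - 1) := by
  simp only [funext_iff, blockCount, filter_insert]
  refine forall_congr' fun j => ?_
  by_cases hj : b.1 = j
  · subst hj
    rw [if_pos rfl, card_insert_of_notMem fun h => hb (mem_filter.1 h).1, Function.update_self]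
    omega
  · rw [if_neg hj, Function.update_of_ne (Ne.symm hj)]

variable [Fintype κ]

def packings (n : ℕ) (t : κ → ℕ) : Finset (Finset (κ × ℕ)) :=
  {S ∈ (univ ×ˢ range n).powerset | IsPacking ℓ n S ∧ blockCount S = t}

variable {ℓ}

theorem sum_mul_blockCount (g : κ → ℕ) (S : Finset (κ × ℕ)) :
    ∑ j, g j * blockCount S j = ∑ p ∈ S, g p.1 := by
  rw [← sum_fiberwise_of_maps_to (g := Prod.fst) (fun p _ => mem_univ p.1)]
  refine sum_congr rfl fun j _ => ?_
  rw [blockCount, sum_congr rfl fun p hp => congrArg g (mem_filter.1 hp).2, sum_const,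
    smul_eq_mul, mul_comm]

theorem sum_blockCount (S : Finset (κ × ℕ)) : ∑ j, blockCount S j = #S := by
  simpa using sum_mul_blockCount 1 S

theorem mem_packings (hℓ : ∀ j, 1 ≤ ℓ j) {n : ℕ} {t : κ → ℕ} {S : Finset (κ × ℕ)} :
    S ∈ packings ℓ n t ↔ IsPacking ℓ n S ∧ blockCount S = t := by
  simp only [packings, mem_filter, mem_powerset, and_iff_right_iff_imp]
  rintro ⟨hS, -⟩ p hp
  have := hS.1 p hp
  have := hℓ p.1
  simp only [mem_product, mem_univ, mem_range, true_and]; omega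

theorem packings_eq_empty {n : ℕ} {t : κ → ℕ} (h : n < ∑ j, ℓ j * t j) :
    packings ℓ n t = ∅ := by
  refine filter_eq_empty_iff.2 fun S _ ⟨hS, hSt⟩ => ?_
  have := hS.sum_le
  rw [← sum_mul_blockCount, hSt] at this
  omega

end Packing

section PackingRecursion

variable {κ : Type*} [DecidableEq κ] {ℓ : κ → ℕ}

theorem isPacking_insert_iff (hℓ : ∀ j, 1 ≤ ℓ j) {N : ℕ} {j : κ} (hj : ℓ j ≤ N)
    {S : Finset (κ × ℕ)} (hS : (j, N - ℓ j) ∉ S) :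
    IsPacking ℓ N (insert (j, N - ℓ j) S) ↔ IsPacking ℓ (N - ℓ j) S := by
  simp only [IsPacking, forall_mem_insert, ne_eq]
  constructor
  · rintro ⟨⟨-, hfit⟩, -, hdisj⟩
    refine ⟨fun p hp => ?_, fun p hp p' hp' => (hdisj p hp).2 p' hp'⟩
    have := (hdisj p hp).1 (ne_of_mem_of_not_mem hp hS)
    have := hfit p hp
    have := hℓ p.1
    omega
  · rintro ⟨hfit, hdisj⟩
    have hfit' : ∀ p ∈ S, p.2 + ℓ p.1 ≤ N := fun p hp => by have := hfit p hp; omega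
    refine ⟨⟨by omega, hfit'⟩, ⟨fun h => (h trivial).elim, fun p hp _ => Or.inr (hfit p hp)⟩,
      fun p hp => ⟨fun _ => Or.inl (hfit p hp), hdisj p hp⟩⟩

variable [Fintype κ]

/-- The bijection removes the block `(j, N - ℓ j)`. -/
theorem card_filter_mem_packings (hℓ : ∀ j, 1 ≤ ℓ j) {N : ℕ} {j : κ} (hj : ℓ j ≤ N)
    {t : κ → ℕ} (ht : 1 ≤ t j) :
    #{S ∈ packings ℓ N t | (j, N - ℓ j) ∈ S}
      = #(packings ℓ (N - ℓ j) (Function.update t j (t j - 1))) := by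
  have hnotMem : ∀ S ∈ packings ℓ (N - ℓ j) (Function.update t j (t j - 1)), (j, N - ℓ j) ∉ S :=
    fun S hS h => by
      have : N - ℓ j + ℓ j ≤ N - ℓ j := ((mem_packings hℓ).1 hS).1.1 _ h
      have := hℓ j
      omega
  refine card_bij' (fun S _ => S.erase (j, N - ℓ j)) (fun S _ => insert (j, N - ℓ j) S)
    (fun S hS => ?_) (fun S hS => ?_) (fun S hS => insert_erase (mem_filter.1 hS).2)
    (fun S hS => erase_insert (hnotMem S hS))
  · obtain ⟨hS, hb⟩ := mem_filter.1 hS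
    rw [mem_packings hℓ] at hS ⊢
    rw [← insert_erase hb, isPacking_insert_iff hℓ hj (notMem_erase _ _),
      blockCount_insert_eq_iff (notMem_erase _ _) ht] at hS
    exact hS
  · rw [mem_filter, mem_packings hℓ, isPacking_insert_iff hℓ hj (hnotMem S hS),
      blockCount_insert_eq_iff (hnotMem S hS) ht, ← mem_packings hℓ]
    exact ⟨hS, mem_insert_self _ _⟩

theorem filter_mem_packings_eq_empty {N : ℕ} {j : κ} {t : κ → ℕ} (ht : t j = 0) :
    {S ∈ packings ℓ N t | (j, N - ℓ j) ∈ S} = ∅ := by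
  refine filter_eq_empty_iff.2 fun S hS hb => ?_
  have hpos : 0 < blockCount S j := card_pos.2 ⟨_, mem_filter.2 ⟨hb, rfl⟩⟩
  rw [((mem_filter.1 hS).2.2 : blockCount S = t), ht] at hpos
  exact hpos.false

theorem filter_packings_succ_fits (hℓ : ∀ j, 1 ≤ ℓ j) (n : ℕ) (t : κ → ℕ) :
    {S ∈ packings ℓ (n + 1) t | ∀ p ∈ S, p.2 + ℓ p.1 ≤ n} = packings ℓ n t := by
  ext S
  rw [mem_filter, mem_packings hℓ, mem_packings hℓ]
  constructor
  · rintro ⟨⟨⟨-, hdisj⟩, hSt⟩, hfit⟩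
    exact ⟨⟨hfit, hdisj⟩, hSt⟩
  · rintro ⟨⟨hfit, hdisj⟩, hSt⟩
    exact ⟨⟨⟨fun p hp => by have := hfit p hp; omega, hdisj⟩, hSt⟩, hfit⟩

theorem filter_packings_succ_not_fits (hℓ : ∀ j, 1 ≤ ℓ j) (n : ℕ) (t : κ → ℕ) :
    {S ∈ packings ℓ (n + 1) t | ¬∀ p ∈ S, p.2 + ℓ p.1 ≤ n}
      = univ.biUnion fun j => {S ∈ packings ℓ (n + 1) t | (j, n + 1 - ℓ j) ∈ S} := by
  ext S
  simp only [mem_filter, mem_biUnion, mem_univ, true_and, not_forall, exists_prop]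
  constructor
  · rintro ⟨hS, p, hp, hpn⟩
    have := ((mem_packings hℓ).1 hS).1.1 p hp
    rw [show p = (p.1, n + 1 - ℓ p.1) from Prod.ext rfl (by omega)] at hp
    exact ⟨p.1, hS, hp⟩
  · rintro ⟨j, hS, hb⟩
    have : n + 1 - ℓ j + ℓ j ≤ n + 1 := ((mem_packings hℓ).1 hS).1.1 _ hb
    have := hℓ j
    exact ⟨hS, _, hb, by dsimp only; omega⟩

/-- Either no block covers the point `n`, or exactly one block, of some label `j`, ends at
`n + 1`. -/
theorem card_packings_succ (hℓ : ∀ j, 1 ≤ ℓ j) (n : ℕ) (t : κ → ℕ) :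
    #(packings ℓ (n + 1) t)
      = #(packings ℓ n t) + ∑ j, #{S ∈ packings ℓ (n + 1) t | (j, n + 1 - ℓ j) ∈ S} := by
  have hdisj : ((univ : Finset κ) : Set κ).PairwiseDisjoint
      fun j => {S ∈ packings ℓ (n + 1) t | (j, n + 1 - ℓ j) ∈ S} := by
    intro j _ j' _ hne
    refine disjoint_left.2 fun S hS hS' => ?_
    obtain ⟨hS, hb⟩ := mem_filter.1 hS
    have hb' := (mem_filter.1 hS').2
    obtain ⟨hfit, hsep⟩ := ((mem_packings hℓ).1 hS).1
    have : n + 1 - ℓ j + ℓ j ≤ n + 1 := hfit _ hb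
    have : n + 1 - ℓ j' + ℓ j' ≤ n + 1 := hfit _ hb'
    have : n + 1 - ℓ j + ℓ j ≤ n + 1 - ℓ j' ∨ n + 1 - ℓ j' + ℓ j' ≤ n + 1 - ℓ j :=
      hsep _ hb _ hb' fun h => hne (congrArg Prod.fst h)
    have := hℓ j
    have := hℓ j'
    omega
  rw [← card_filter_add_card_filter_not (fun S => ∀ p ∈ S, p.2 + ℓ p.1 ≤ n),
    filter_packings_succ_fits hℓ, filter_packings_succ_not_fits hℓ, card_biUnion hdisj]

end PackingRecursion

section PackingCount

open Nat

variable {κ : Type*} [Fintype κ]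

theorem sum_mul_eq_sum_sub_one_mul_add_sum {ℓ : κ → ℕ} (hℓ : ∀ j, 1 ≤ ℓ j) (t : κ → ℕ) :
    ∑ j, ℓ j * t j = (∑ j, (ℓ j - 1) * t j) + ∑ j, t j := by
  rw [← sum_add_distrib]
  exact sum_congr rfl fun j _ => by rw [← add_one_mul, Nat.sub_add_cancel (hℓ j)]

variable [DecidableEq κ]

theorem sum_mul_update_sub_one_add (g t : κ → ℕ) {j : κ} (ht : 1 ≤ t j) :
    (∑ i, g i * Function.update t j (t j - 1) i) + g j = ∑ i, g i * t i := by
  have hne : ∀ i ∈ univ.erase j, g i * Function.update t j (t j - 1) i = g i * t i :=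
    fun i hi => by rw [Function.update_of_ne (ne_of_mem_erase hi)]
  rw [← add_sum_erase _ _ (mem_univ j), ← add_sum_erase _ _ (mem_univ j), sum_congr rfl hne,
    Function.update_self]
  obtain ⟨k, hk⟩ : ∃ k, t j = k + 1 := ⟨t j - 1, by omega⟩
  rw [hk, Nat.add_sub_cancel]
  ring

theorem prod_factorial_eq_mul_prod_factorial_update (t : κ → ℕ) {j : κ} (ht : 1 ≤ t j) :
    ∏ i, (t i)! = t j * ∏ i, (Function.update t j (t j - 1) i)! := by
  have hne : ∀ i ∈ univ.erase j, (Function.update t j (t j - 1) i)! = (t i)! :=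
    fun i hi => by rw [Function.update_of_ne (ne_of_mem_erase hi)]
  rw [← mul_prod_erase _ _ (mem_univ j), ← mul_prod_erase _ _ (mem_univ j), prod_congr rfl hne,
    Function.update_self]
  obtain ⟨k, hk⟩ : ∃ k, t j = k + 1 := ⟨t j - 1, by omega⟩
  rw [hk, Nat.add_sub_cancel, factorial_succ]
  ring

variable {ℓ : κ → ℕ}

theorem packings_zero (hℓ : ∀ j, 1 ≤ ℓ j) : packings ℓ 0 (0 : κ → ℕ) = {∅} := by
  refine eq_singleton_iff_unique_mem.2 ⟨(mem_packings hℓ).2 ⟨by simp [IsPacking],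
    funext fun j => by simp [blockCount]⟩, fun S hS => ?_⟩
  simpa using (mem_filter.1 hS).1

/-- Packings of type `t` are arrangements in a row of the `t j` blocks of each label `j` and of the
`n - ∑ j, ℓ j * t j` uncovered points, hence counted by a multinomial coefficient. -/
theorem card_packings_mul (hℓ : ∀ j, 1 ≤ ℓ j) (n : ℕ) (t : κ → ℕ) (ht : ∑ j, ℓ j * t j ≤ n) :
    #(packings ℓ n t) * ((∏ j, (t j)!) * (n - ∑ j, ℓ j * t j)!)
      = (n - ∑ j, (ℓ j - 1) * t j)! := by
  induction n using Nat.strong_induction_on generalizing t with | _ n ih =>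
  have hsum := sum_mul_eq_sum_sub_one_mul_add_sum hℓ t
  rcases n with _ | n
  · obtain rfl : t = 0 := funext fun j => by
      have := sum_eq_zero_iff.1 (Nat.le_zero.1 ht) j (mem_univ j)
      have := hℓ j
      simp_all
    simp [packings_zero hℓ]
  have hfits : #(packings ℓ n t) * ((∏ j, (t j)!) * (n + 1 - ∑ j, ℓ j * t j)!)
      = (n + 1 - ∑ j, ℓ j * t j) * (n - ∑ j, (ℓ j - 1) * t j)! := by
    rcases Nat.lt_or_ge n (∑ j, ℓ j * t j) with h | h
    · rw [packings_eq_empty h, show n + 1 - ∑ j, ℓ j * t j = 0 by omega]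
      simp
    · rw [show n + 1 - ∑ j, ℓ j * t j = n - ∑ j, ℓ j * t j + 1 by omega, factorial_succ,
        ← ih n (lt_add_one n) t h]
      ring
  have hlast : ∀ j, #{S ∈ packings ℓ (n + 1) t | (j, n + 1 - ℓ j) ∈ S}
        * ((∏ j, (t j)!) * (n + 1 - ∑ j, ℓ j * t j)!)
      = t j * (n - ∑ j, (ℓ j - 1) * t j)! := by
    intro j
    rcases Nat.eq_zero_or_pos (t j) with h0 | hpos
    · rw [filter_mem_packings_eq_empty h0, h0]
      simp
    have hσ := sum_mul_update_sub_one_add ℓ t hpos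
    have hτ := sum_mul_update_sub_one_add (fun i => ℓ i - 1) t hpos
    have := hℓ j
    rw [card_filter_mem_packings hℓ (by omega) hpos,
      prod_factorial_eq_mul_prod_factorial_update t hpos,
      show n + 1 - ∑ j, ℓ j * t j
        = n + 1 - ℓ j - ∑ i, ℓ i * Function.update t j (t j - 1) i by omega,
      show n - ∑ j, (ℓ j - 1) * t j
        = n + 1 - ℓ j - ∑ i, (ℓ i - 1) * Function.update t j (t j - 1) i by omega,
      ← ih (n + 1 - ℓ j) (by omega) _ (by omega)]
    ring
  have hτ : ∑ j, t j = 0 → ∑ j, (ℓ j - 1) * t j = 0 := fun h =>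
    sum_eq_zero fun j _ => by rw [sum_eq_zero_iff.1 h j (mem_univ j), mul_zero]
  rw [card_packings_succ hℓ, add_mul, sum_mul, hfits, sum_congr rfl fun j _ => hlast j, ← sum_mul,
    ← add_mul, show n + 1 - (∑ j, ℓ j * t j) + ∑ j, t j = n - (∑ j, (ℓ j - 1) * t j) + 1 by omega,
    ← factorial_succ]
  congr 1
  omega

end PackingCount

section AdjacentCycles

variable {κ : Type*} {ℓ : κ → ℕ} {n : ℕ}

theorem card_isAdjCycle_of_not_isPacking (hinj : Function.Injective ℓ) (hℓ : ∀ j, 1 ≤ ℓ j)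
    {T : Finset (κ × ℕ)} (hT : ¬IsPacking ℓ n T) :
    #{π : Perm (Fin n) | ∀ p ∈ T, isAdjCycle (ℓ p.1) π p.2} = 0 := by
  refine card_eq_zero.2 (filter_eq_empty_iff.2 fun π _ h => hT ⟨fun p hp => (h p hp).1,
    fun p hp p' hp' hne => ?_⟩)
  refine ((h p hp).eq_or_disjoint (hℓ _) (hℓ _) (h p' hp')).resolve_left ?_
  exact fun ⟨hq, ha⟩ => hne (Prod.ext (hinj hq) ha)

variable [DecidableEq κ]

theorem card_isAdjCycle_of_isPacking {T : Finset (κ × ℕ)} (hT : IsPacking ℓ n T) :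
    #{π : Perm (Fin n) | ∀ p ∈ T, isAdjCycle (ℓ p.1) π p.2} = (n - ∑ p ∈ T, ℓ p.1).factorial := by
  have hcount := card_perm_eqOn_pairwiseDisjoint (fun p => adjBlock n p.2 (ℓ p.1))
    (fun p => adjCycle n p.2 (ℓ p.1)) T (fun p _ _ => adjCycle_apply_of_notMem)
    (fun p hp p' hp' hne => disjoint_adjBlock (hT.2 p hp p' hp' hne)) ∅ (by simp)
  rw [card_empty, zero_add, sum_congr rfl fun p hp => card_adjBlock (hT.1 p hp),
    Fintype.card_fin] at hcount
  rw [← hcount]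
  congr 1
  ext π
  simp only [mem_filter, mem_univ, true_and, isAdjCycle_iff, notMem_empty, false_imp_iff,
    implies_true, and_true]
  exact forall₂_congr fun p hp => and_iff_right (hT.1 p hp)

end AdjacentCycles

section Count

variable {m : ℕ}

theorem numMulti_zero_eq_sum_powerset (Q : Fin m → ℕ) (n : ℕ) :
    (numMulti Q n (fun _ => 0) : ℤ) = ∑ T ∈ (univ ×ˢ range n).powerset,
      (-1) ^ #T * (#{π : Perm (Fin n) | ∀ p ∈ T, isAdjCycle (Q p.1) π p.2} : ℤ) := by
  have hinf : ∀ T : Finset (Fin m × ℕ),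
      T.inf (fun p => ({π | isAdjCycle (Q p.1) π p.2} : Finset (Perm (Fin n))))
        = ({π | ∀ p ∈ T, isAdjCycle (Q p.1) π p.2} : Finset (Perm (Fin n))) := fun T => by
    ext π; simp [mem_inf]
  simp_rw [← hinf, ← inclusion_exclusion_card_inf_compl]
  congr 1
  unfold numMulti
  congr 1
  ext π
  simp [adjCycleCount, mem_inf, filter_eq_empty_iff]

theorem numMulti_zero_eq_sum_packings {Q : Fin m → ℕ} (hQ : Function.Injective Q)
    (hQ1 : ∀ j, 1 ≤ Q j) (n : ℕ) :
    (numMulti Q n (fun _ => 0) : ℤ) =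
      ∑ t ∈ (Fintype.piFinset fun _ : Fin m => range (n + 1)).filter
          (fun t => ∑ j, Q j * t j ≤ n),
        (-1) ^ (∑ j, t j) * #(packings Q n t) * ((n - ∑ j, Q j * t j).factorial : ℤ) := by
  have hmaps : ∀ T ∈ {T ∈ (univ ×ˢ range n : Finset (Fin m × ℕ)).powerset | IsPacking Q n T},
      blockCount T ∈ (Fintype.piFinset fun _ : Fin m => range (n + 1)).filter
        (fun t => ∑ j, Q j * t j ≤ n) := fun T hT => by
    have hle := (mem_filter.1 hT).2.sum_le
    rw [← sum_mul_blockCount] at hle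
    refine mem_filter.2 ⟨Fintype.mem_piFinset.2 fun j => mem_range.2 ?_, hle⟩
    have := single_le_sum (f := fun j => Q j * blockCount T j) (fun j _ => Nat.zero_le _) (mem_univ j)
    have := Nat.le_mul_of_pos_left (blockCount T j) (hQ1 j)
    omega
  rw [numMulti_zero_eq_sum_powerset, ← sum_filter_of_ne fun T _ h => by_contra fun hT =>
      h (by rw [card_isAdjCycle_of_not_isPacking hQ hQ1 hT]; simp),
    ← sum_fiberwise_of_maps_to hmaps]
  refine sum_congr rfl fun t _ => ?_
  rw [filter_filter]
  change ∑ T ∈ packings Q n t, _ = _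
  have hterm : ∀ T ∈ packings Q n t, (-1) ^ #T * (#{π : Perm (Fin n) | ∀ p ∈ T,
      isAdjCycle (Q p.1) π p.2} : ℤ) = (-1) ^ (∑ j, t j) * (n - ∑ j, Q j * t j).factorial :=
    fun T hT => by
      obtain ⟨hpack, rfl⟩ := (mem_packings hQ1).1 hT
      rw [card_isAdjCycle_of_isPacking hpack, sum_blockCount, sum_mul_blockCount]
  rw [sum_congr rfl hterm, sum_const, nsmul_eq_mul]
  ring

end Count

theorem stmt17_general (m n : ℕ) (Q : Fin m → ℕ) (hQ : StrictMono Q) (hQ1 : ∀ j, 1 ≤ Q j) :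
    (numMulti Q n (fun _ => 0) : ℚ) =
      ∑ t ∈ (Fintype.piFinset fun _ : Fin m => Finset.range (n + 1)).filter
          (fun t => ∑ j, Q j * t j ≤ n),
        (-1 : ℚ) ^ (∑ j, t j) *
          ((n - ∑ j, (Q j - 1) * t j).factorial : ℚ) / ((∏ j, (t j).factorial : ℕ) : ℚ) := by
  rw [← Int.cast_natCast, numMulti_zero_eq_sum_packings hQ.injective hQ1 n]
  push_cast
  refine sum_congr rfl fun t ht => ?_
  rw [eq_div_iff (by positivity), ← card_packings_mul hQ1 n t (mem_filter.1 ht).2]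
  push_cast
  ring

theorem stmt17 (m n : ℕ) (Q : Fin m → ℕ) (hQ : StrictMono Q) (hQ1 : ∀ j, 1 ≤ Q j)
    (hn : 1 ≤ n) :
    (numMulti Q n (fun _ => 0) : ℚ) =
      ∑ t ∈ (Fintype.piFinset fun _ : Fin m => Finset.range (n + 1)).filter
          (fun t => ∑ j, Q j * t j ≤ n),
        (-1 : ℚ) ^ (∑ j, t j) *
          ((n - ∑ j, (Q j - 1) * t j).factorial : ℚ) / ((∏ j, (t j).factorial : ℕ) : ℚ) :=
  stmt17_general m n Q hQ hQ1
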